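/- arXiv:0805.2036 — 2 statements merged into one kernel-verified Lean document; each statement's English description precedes it below -/
import Mathlib

section
/- Let K ⊆ H be a nonempty compact set which is norm separable. Then for every ε > 0 there exists an open set U ⊆ H such that K ∩ U is nonempty and the norm diameter of K ∩ U is at most ε. -/
noncomputable section

/-- `H = [-1,1]^ℕ`, the product of countably many copies of `[-1,1]`, with the
product topology (and its Borel σ-algebra). -/
abbrev H : Type := ℕ → Set.Icc (-1 : ℝ) 1

/-- The supremum distance `‖f − g‖_∞ = sup_n |f(n) − g(n)|` on `H`. -/
noncomputable def normDist (f g : H) : ℝ := ⨆ n, |(f n : ℝ) - (g n : ℝ)|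

/-- The norm diameter of `S ⊆ H`: `sup {‖f − g‖_∞ : f, g ∈ S}`. -/
noncomputable def normDiam (S : Set H) : ℝ :=
  sSup {d : ℝ | ∃ f ∈ S, ∃ g ∈ S, d = normDist f g}

/-- `S ⊆ H` is norm separable: separable w.r.t. the metric `(f,g) ↦ ‖f − g‖_∞`. -/
def NormSeparable (S : Set H) : Prop :=
  ∃ D : Set H, D.Countable ∧ D ⊆ S ∧ ∀ f ∈ S, ∀ δ : ℝ, 0 < δ → ∃ g ∈ D, normDist f g < δ

/-!
The closed sup-norm balls of radius `ε / 2` around a countable norm-dense subset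
of `K` cover `K`, and each of them is closed in the product topology, being an intersection of
coordinatewise conditions. The compact Hausdorff space `K` is a Baire space, so one of these
balls has nonempty interior relative to `K`, i.e. contains `K ∩ U` for some open `U` meeting `K`.
-/

theorem IsCompact.exists_isOpen_inter_subset_of_subset_iUnion {X ι : Type*} [TopologicalSpace X]
    [T2Space X] [Countable ι] {K : Set X} (hK : IsCompact K) (hne : K.Nonempty)
    {C : ι → Set X} (hC : ∀ i, IsClosed (C i)) (hcover : K ⊆ ⋃ i, C i) :
    ∃ i, ∃ U : Set X, IsOpen U ∧ (K ∩ U).Nonempty ∧ K ∩ U ⊆ C i := by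
  have : CompactSpace K := isCompact_iff_compactSpace.mp hK
  have : Nonempty K := hne.to_subtype
  have hcoverK : ⋃ i, ((↑) ⁻¹' C i : Set K) = Set.univ := by
    rw [← Set.preimage_iUnion, Set.eq_univ_iff_forall]
    exact fun x => hcover x.2
  obtain ⟨i, x, hx⟩ := nonempty_interior_of_iUnion_of_closed
    (fun i => (hC i).preimage continuous_subtype_val) hcoverK
  obtain ⟨U, hU, hUeq⟩ := isOpen_induced_iff.mp (isOpen_interior (s := ((↑) : K → X) ⁻¹' C i))
  refine ⟨i, U, hU, ⟨x, x.2, show x ∈ (↑) ⁻¹' U by rwa [hUeq]⟩, ?_⟩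
  rintro y ⟨hyK, hyU⟩
  have hy : (⟨y, hyK⟩ : K) ∈ (↑) ⁻¹' U := hyU
  rw [hUeq] at hy
  exact interior_subset (s := ((↑) : K → X) ⁻¹' C i) hy

theorem bddAbove_range_abs_sub (f g : H) :
    BddAbove (Set.range fun n => |(f n : ℝ) - (g n : ℝ)|) := by
  refine ⟨2, ?_⟩
  rintro _ ⟨n, rfl⟩
  have hf := (f n).2
  have hg := (g n).2
  simp only [Set.mem_Icc] at hf hg
  exact abs_sub_le_iff.mpr ⟨by linarith, by linarith⟩

theorem abs_sub_le_normDist (f g : H) (n : ℕ) : |(f n : ℝ) - (g n : ℝ)| ≤ normDist f g :=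
  le_ciSup (bddAbove_range_abs_sub f g) n

theorem normDist_le_iff {f g : H} {r : ℝ} :
    normDist f g ≤ r ↔ ∀ n, |(f n : ℝ) - (g n : ℝ)| ≤ r :=
  ciSup_le_iff (bddAbove_range_abs_sub f g)

theorem normDist_comm (f g : H) : normDist f g = normDist g f := by
  simp only [normDist, abs_sub_comm]

theorem normDist_triangle (f g h : H) : normDist f h ≤ normDist f g + normDist g h :=
  normDist_le_iff.mpr fun n =>
    (abs_sub_le _ _ _).trans (add_le_add (abs_sub_le_normDist f g n) (abs_sub_le_normDist g h n))

def normClosedBall (g : H) (r : ℝ) : Set H := {f | normDist f g ≤ r}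

theorem isClosed_normClosedBall (g : H) (r : ℝ) : IsClosed (normClosedBall g r) := by
  have hball : normClosedBall g r = ⋂ n, {f : H | |(f n : ℝ) - (g n : ℝ)| ≤ r} := by
    ext f
    simp only [normClosedBall, Set.mem_ofPred_eq, Set.mem_iInter, normDist_le_iff]
  rw [hball]
  exact isClosed_iInter fun n => isClosed_le (by fun_prop) continuous_const

theorem normDiam_le_of_subset_normClosedBall {S : Set H} {g : H} {r : ℝ} (hr : 0 ≤ r)
    (hS : S ⊆ normClosedBall g r) : normDiam S ≤ 2 * r := by
  refine Real.sSup_le ?_ (by positivity)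
  rintro _ ⟨f, hf, h, hh, rfl⟩
  calc normDist f h ≤ normDist f g + normDist g h := normDist_triangle f g h
    _ = normDist f g + normDist h g := by rw [normDist_comm g h]
    _ ≤ r + r := add_le_add (hS hf) (hS hh)
    _ = 2 * r := by ring

theorem NormSeparable.subset_iUnion_normClosedBall {K : Set H} (hsep : NormSeparable K) {r : ℝ}
    (hr : 0 < r) : ∃ D : Set H, D.Countable ∧ K ⊆ ⋃ g : D, normClosedBall g r := by
  obtain ⟨D, hD, -, hdense⟩ := hsep
  refine ⟨D, hD, fun f hf => ?_⟩
  obtain ⟨g, hg, hfg⟩ := hdense f hf r hr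
  exact Set.mem_iUnion.mpr ⟨⟨g, hg⟩, hfg.le⟩

/-- **Lemma 3.** If `K ⊆ H` is nonempty, compact and norm separable, then for every `ε > 0`
there is an open `U ⊆ H` with `K ∩ U` nonempty of norm diameter at most `ε`. -/
theorem exists_open_small_normDiam (K : Set H) (hK : K.Nonempty) (hc : IsCompact K)
    (hsep : NormSeparable K) (ε : ℝ) (hε : 0 < ε) :
    ∃ U : Set H, IsOpen U ∧ (K ∩ U).Nonempty ∧ normDiam (K ∩ U) ≤ ε := by
  obtain ⟨D, hD, hcover⟩ := hsep.subset_iUnion_normClosedBall (half_pos hε)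
  have : Countable D := hD.to_subtype
  obtain ⟨g, U, hU, hKU, hsub⟩ := hc.exists_isOpen_inter_subset_of_subset_iUnion hK
    (fun g => isClosed_normClosedBall _ _) hcover
  refine ⟨U, hU, hKU, ?_⟩
  calc normDiam (K ∩ U) ≤ 2 * (ε / 2) := normDiam_le_of_subset_normClosedBall (half_pos hε).le hsub
    _ = ε := by ring
end
end

section
/- Fix ε > 0 and an open set U ⊆ H. Then: (1) the set A_{U,ε} = { K ∈ K(H) : K ∩ U ≠ ∅ and the norm diameter of K ∩ U is at most ε } is a Borel subset of K(H) (in fact, the complement of a countable union of closed sets); and (2) the set { (K, f) ∈ K(H) × H : f ∈ D_{U,ε}(K) } is Borel in K(H) × H, where D_{U,ε}(K) = K \ U if K ∈ A_{U,ε} and D_{U,ε}(K) = K otherwise. -/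
noncomputable section

open scoped Classical

/-- `K(H)`: the space of nonempty compact subsets of `H`. -/
def KH : Type := {K : Set H // IsCompact K ∧ K.Nonempty}

/-- The Vietoris topology on `K(H)`, generated by the sets
`{K : K ∩ U ≠ ∅}` and `{K : K ⊆ U}` for `U ⊆ H` open. -/
instance : TopologicalSpace KH :=
  TopologicalSpace.generateFrom
    ({S : Set KH | ∃ U : Set H, IsOpen U ∧ S = {K : KH | (K.val ∩ U).Nonempty}} ∪
     {S : Set KH | ∃ U : Set H, IsOpen U ∧ S = {K : KH | K.val ⊆ U}})

/-- The Borel σ-algebra of the Vietoris topology on `K(H)`. -/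
instance : MeasurableSpace KH := borel KH

/-- The derivation `D_{U,ε}`: remove `U` from `K` if `K ∩ U` is nonempty of norm diameter
at most `ε`; otherwise leave `K` unchanged. -/
noncomputable def Dderiv (U : Set H) (ε : ℝ) (K : Set H) : Set H :=
  if (K ∩ U).Nonempty ∧ normDiam (K ∩ U) ≤ ε then K \ U else K


/-!
`K ∈ A_{U,ε}` fails exactly when `K` misses `U` or `K` contains two points of `U` at sup-distance
`> ε`. The pairs of points of `U` at sup-distance `> ε` form an open subset of `H × H`, hence a
countable union of closed sets `R k`, and for closed `R` the set of `K` with `(K × K) ∩ R ≠ ∅`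
is Vietoris closed by the tube lemma. The set in (2) is the closed set `{(K, f) : f ∈ K}` minus
`A_{U,ε} × U`.
-/

open Set

theorem IsOpen.exists_iUnion_isClosed_of_pseudoMetrizable {X : Type*} [TopologicalSpace X]
    [TopologicalSpace.PseudoMetrizableSpace X] {U : Set X} (hU : IsOpen U) :
    ∃ F : ℕ → Set X, (∀ n, IsClosed (F n)) ∧ ⋃ n, F n = U := by
  let _ := TopologicalSpace.pseudoMetrizableSpacePseudoMetric X
  obtain ⟨F, hF, -, hFU, -⟩ := hU.exists_iUnion_isClosed
  exact ⟨F, hF, hFU⟩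

section normDist

lemma abs_coe_sub_coe_le_two (f g : H) (n : ℕ) : |(f n : ℝ) - (g n : ℝ)| ≤ 2 := by
  obtain ⟨hf₁, hf₂⟩ := (f n).2
  obtain ⟨hg₁, hg₂⟩ := (g n).2
  rw [abs_sub_le_iff]
  constructor <;> linarith

lemma bddAbove_range_abs_coe_sub_coe (f g : H) :
    BddAbove (range fun n => |(f n : ℝ) - (g n : ℝ)|) :=
  ⟨2, by rintro _ ⟨n, rfl⟩; exact abs_coe_sub_coe_le_two f g n⟩

lemma normDist_le_two (f g : H) : normDist f g ≤ 2 :=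
  ciSup_le (abs_coe_sub_coe_le_two f g)

lemma lt_normDist_iff {f g : H} {ε : ℝ} :
    ε < normDist f g ↔ ∃ n, ε < |(f n : ℝ) - (g n : ℝ)| :=
  lt_ciSup_iff (bddAbove_range_abs_coe_sub_coe f g)

lemma isOpen_setOf_lt_normDist (ε : ℝ) : IsOpen {p : H × H | ε < normDist p.1 p.2} := by
  simp only [lt_normDist_iff, ofPred_exists]
  refine isOpen_iUnion fun n => isOpen_lt continuous_const ?_
  fun_prop

lemma normDiam_le_iff {S : Set H} (hS : S.Nonempty) {ε : ℝ} :
    normDiam S ≤ ε ↔ ∀ f ∈ S, ∀ g ∈ S, normDist f g ≤ ε := by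
  have hbdd : BddAbove {d : ℝ | ∃ f ∈ S, ∃ g ∈ S, d = normDist f g} :=
    ⟨2, by rintro _ ⟨f, -, g, -, rfl⟩; exact normDist_le_two f g⟩
  obtain ⟨f, hf⟩ := hS
  rw [normDiam, csSup_le_iff hbdd ⟨_, f, hf, f, hf, rfl⟩]
  constructor
  · exact fun h f hf g hg => h _ ⟨f, hf, g, hg, rfl⟩
  · rintro h _ ⟨f, hf, g, hg, rfl⟩
    exact h f hf g hg

end normDist

namespace KH

instance : BorelSpace KH := ⟨rfl⟩

lemma isOpen_setOf_subset {V : Set H} (hV : IsOpen V) : IsOpen {K : KH | K.val ⊆ V} :=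
  TopologicalSpace.isOpen_generateFrom_of_mem (Or.inr ⟨V, hV, rfl⟩)

lemma isOpen_setOf_inter_nonempty {V : Set H} (hV : IsOpen V) :
    IsOpen {K : KH | (K.val ∩ V).Nonempty} :=
  TopologicalSpace.isOpen_generateFrom_of_mem (Or.inl ⟨V, hV, rfl⟩)

lemma isClosed_setOf_prod_inter_nonempty {R : Set (H × H)} (hR : IsClosed R) :
    IsClosed {K : KH | (K.val ×ˢ K.val ∩ R).Nonempty} := by
  rw [← isOpen_compl_iff, isOpen_iff_forall_mem_open]
  intro K hK
  have hKR : K.val ×ˢ K.val ⊆ Rᶜ := fun p hp hpR => hK ⟨p, hp, hpR⟩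
  obtain ⟨u, v, hu, hv, hKu, hKv, huv⟩ :=
    generalized_tube_lemma K.2.1 K.2.1 hR.isOpen_compl hKR
  refine ⟨{K' : KH | K'.val ⊆ u ∩ v}, ?_, isOpen_setOf_subset (hu.inter hv),
    subset_inter hKu hKv⟩
  rintro K' hK' ⟨⟨f, g⟩, ⟨hf, hg⟩, hfg⟩
  exact huv ⟨(hK' hf).1, (hK' hg).2⟩ hfg

lemma isClosed_setOf_mem : IsClosed {p : KH × H | p.2 ∈ p.1.val} := by
  rw [← isOpen_compl_iff, isOpen_iff_forall_mem_open]
  rintro ⟨K, f⟩ hf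
  obtain ⟨W, V, hW, hV, hKW, hfV, hWV⟩ := K.2.1.separation_of_notMem hf
  refine ⟨{K' : KH | K'.val ⊆ W} ×ˢ V, ?_, (isOpen_setOf_subset hW).prod hV, hKW, hfV⟩
  rintro ⟨K', g⟩ ⟨hK', hg⟩ (hgK' : g ∈ K'.val)
  exact hWV.le_bot ⟨hK' hgK', hg⟩

end KH

lemma nonempty_inter_and_normDiam_le_iff {K U : Set H} {ε : ℝ} :
    (K ∩ U).Nonempty ∧ normDiam (K ∩ U) ≤ ε ↔
      (K ∩ U).Nonempty ∧ ¬(K ×ˢ K ∩ (U ×ˢ U ∩ {p | ε < normDist p.1 p.2})).Nonempty := by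
  refine and_congr_right fun hne => ?_
  rw [normDiam_le_iff hne]
  simp only [Set.Nonempty, mem_inter_iff, mem_prod, mem_ofPred_eq, Prod.exists, not_exists,
    not_and, not_lt]
  grind

lemma mem_Dderiv_iff {U K : Set H} {ε : ℝ} {f : H} :
    f ∈ Dderiv U ε K ↔ f ∈ K ∧ ¬(((K ∩ U).Nonempty ∧ normDiam (K ∩ U) ≤ ε) ∧ f ∈ U) := by
  unfold Dderiv
  split_ifs with h <;> simp [h]

theorem exists_isClosed_setOf_nonempty_inter_and_normDiam_le_eq_compl_iUnion {U : Set H}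
    (hU : IsOpen U) (ε : ℝ) :
    ∃ C : ℕ → Set KH, (∀ n, IsClosed (C n)) ∧
      {K : KH | (K.val ∩ U).Nonempty ∧ normDiam (K.val ∩ U) ≤ ε} = (⋃ n, C n)ᶜ := by
  obtain ⟨R, hR, hRU⟩ := ((hU.prod hU).inter
    (isOpen_setOf_lt_normDist ε)).exists_iUnion_isClosed_of_pseudoMetrizable
  let C : ℕ → Set KH
    | 0 => {K | (K.val ∩ U).Nonempty}ᶜ
    | k + 1 => {K | (K.val ×ˢ K.val ∩ R k).Nonempty}
  refine ⟨C, ?_, ?_⟩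
  · rintro (_ | k)
    exacts [(KH.isOpen_setOf_inter_nonempty hU).isClosed_compl,
      KH.isClosed_setOf_prod_inter_nonempty (hR k)]
  · rw [← union_iUnion_nat_succ, compl_union, compl_compl]
    ext K
    simp [nonempty_inter_and_normDiam_le_iff, ← hRU, inter_iUnion, C]

theorem borel_Dderiv_general (ε : ℝ) (U : Set H) (hU : IsOpen U) :
    (MeasurableSet {K : KH | (K.val ∩ U).Nonempty ∧ normDiam (K.val ∩ U) ≤ ε} ∧
      ∃ C : ℕ → Set KH, (∀ n, IsClosed (C n)) ∧
        {K : KH | (K.val ∩ U).Nonempty ∧ normDiam (K.val ∩ U) ≤ ε} = (⋃ n, C n)ᶜ) ∧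
    MeasurableSet {p : KH × H | p.2 ∈ Dderiv U ε p.1.val} := by
  obtain ⟨C, hC, hA⟩ := exists_isClosed_setOf_nonempty_inter_and_normDiam_le_eq_compl_iUnion hU ε
  set A := {K : KH | (K.val ∩ U).Nonempty ∧ normDiam (K.val ∩ U) ≤ ε}
  have hAmeas : MeasurableSet A := by
    rw [hA]
    exact (MeasurableSet.iUnion fun n => (hC n).measurableSet).compl
  refine ⟨⟨hAmeas, C, hC, hA⟩, ?_⟩
  have hD : {p : KH × H | p.2 ∈ Dderiv U ε p.1.val} =
      {p : KH × H | p.2 ∈ p.1.val} \ (Prod.fst ⁻¹' A ∩ Prod.snd ⁻¹' U) := by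
    ext p
    exact mem_Dderiv_iff
  rw [hD]
  exact KH.isClosed_setOf_mem.measurableSet.diff
    ((hAmeas.preimage measurable_fst).inter (hU.measurableSet.preimage measurable_snd))

/-- **Lemma 4(i).** For `ε > 0` and `U ⊆ H` open: the set `A_{U,ε}` is Borel in `K(H)`
(in fact the complement of a countable union of closed sets) and the graph-type set
`{(K, f) : f ∈ D_{U,ε}(K)}` is Borel in `K(H) × H`. -/
theorem borel_Dderiv (ε : ℝ) (hε : 0 < ε) (U : Set H) (hU : IsOpen U) :
    (MeasurableSet {K : KH | (K.val ∩ U).Nonempty ∧ normDiam (K.val ∩ U) ≤ ε} ∧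
      ∃ C : ℕ → Set KH, (∀ n, IsClosed (C n)) ∧
        {K : KH | (K.val ∩ U).Nonempty ∧ normDiam (K.val ∩ U) ≤ ε} = (⋃ n, C n)ᶜ) ∧
    MeasurableSet {p : KH × H | p.2 ∈ Dderiv U ε p.1.val} :=
  borel_Dderiv_general ε U hU
end
end
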